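/- Let s_{ij} ∈ {−1, +1} be the sign of the semi-partial correlation ρ_{ij(1,...,i-1)}. Define the lower-triangular matrix L by L_{jj} = sqrt(det(R_j)/det(R_{j-1})) and, for j > i, L_{ji} = s_{ij} · sqrt(det(R_i^{*j})/det(R_{i-1}) − det(R_{i+1}^{*j})/det(R_i)). Then L L^T = R. -/

import Mathlib

open Matrix

/-- Leading `i × i` principal submatrix. -/
def lead {n : ℕ} (R : Matrix (Fin n) (Fin n) ℝ) (i : ℕ) (h : i ≤ n) :
    Matrix (Fin i) (Fin i) ℝ :=
  R.submatrix (Fin.castLE h) (Fin.castLE h)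

/-- First `i` entries of column `j` of `R`. -/
def colv {n : ℕ} (R : Matrix (Fin n) (Fin n) ℝ) (i : ℕ) (h : i ≤ n) (j : Fin n) :
    Fin i → ℝ :=
  fun k => R (Fin.castLE h k) j


/-- The bordered matrix `R_{i+1}^{*j}` (0-indexed size parameter `i`):
`[[R_i, (ρ_{i+1}^{*j})ᵀ], [ρ_{i+1}^{*j}, 1]]`, i.e. the leading `i × i`
submatrix bordered by the first `i` entries of column `j` with corner `1`. -/
def brd {n : ℕ} (R : Matrix (Fin n) (Fin n) ℝ) (i : ℕ) (h : i ≤ n) (j : Fin n) :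
    Matrix (Fin (i + 1)) (Fin (i + 1)) ℝ :=
  Matrix.of fun k l =>
    if hk : (k : ℕ) < i then
      if hl : (l : ℕ) < i then R ⟨k, lt_of_lt_of_le hk h⟩ ⟨l, lt_of_lt_of_le hl h⟩
      else R ⟨k, lt_of_lt_of_le hk h⟩ j
    else if hl : (l : ℕ) < i then R ⟨l, lt_of_lt_of_le hl h⟩ j
    else 1

/-- The semi-partial correlation coefficient `ρ_{k+1,j(1,…,k)}` (0-indexed `k`,
0-indexed column `j`):
`(R_{kj} − ρ_k^{*j} R_{k−1}⁻¹ ρ_kᵀ)/√(1 − ρ_k R_{k−1}⁻¹ ρ_kᵀ)`. -/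
noncomputable def spc {n : ℕ} (R : Matrix (Fin n) (Fin n) ℝ) (k : ℕ) (hk : k < n)
    (j : Fin n) : ℝ :=
  (R ⟨k, hk⟩ j - colv R k hk.le j ⬝ᵥ (lead R k hk.le)⁻¹ *ᵥ colv R k hk.le ⟨k, hk⟩) /
    Real.sqrt
      (1 - colv R k hk.le ⟨k, hk⟩ ⬝ᵥ (lead R k hk.le)⁻¹ *ᵥ colv R k hk.le ⟨k, hk⟩)

/-! Write `G_m(j, j') = ρ_{m+1}^{*j} R_m⁻¹ (ρ_{m+1}^{*j'})ᵀ` (`leadForm`, 0-based indices).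
Bordering `R_m` by one row and column and inverting blockwise gives the rank-one update
`G_{m+1}(j, j') = G_m(j, j') + ρ_{m+1,j(1,…,m)} ρ_{m+1,j'(1,…,m)}`, and `G_n(j, j') = R_{jj'}`.
Summing the updates, the matrix `S` of semi-partial correlations satisfies `Sᵀ S = R`.
The Schur complement formula `det R_{m+1}^{*j} = det R_m (1 - G_m(j, j))` shows that the
determinant quotients defining `L` are exactly `|S_{ij}|` (and `S_{jj}` on the diagonal), the
signs `s_{ij}` restore the sign of `S_{ij}`, and `S_{ij} = 0` for `j < i`; hence `L = Sᵀ`. -/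

theorem sign_mul_abs_eq {s x : ℝ} (hs : s = 1 ∨ s = -1) (h : 0 ≤ s * x) : s * |x| = x := by
  rcases hs with rfl | rfl
  · rw [one_mul] at h ⊢
    exact abs_of_nonneg h
  · rw [abs_of_nonpos (by linarith)]
    ring

section Bordered

variable {ι 𝕜 : Type*} [Fintype ι] [DecidableEq ι] [Field 𝕜]

theorem det_fromBlocks_replicateCol_replicateRow (A : Matrix ι ι 𝕜) (hA : IsUnit A.det)
    (v r : ι → 𝕜) (c : 𝕜) :
    (fromBlocks A (replicateCol (Fin 1) v) (replicateRow (Fin 1) r) (of fun _ _ => c)).det =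
      A.det * (c - r ⬝ᵥ A⁻¹ *ᵥ v) := by
  let := A.invertibleOfIsUnitDet hA
  rw [det_fromBlocks₁₁, invOf_eq_nonsing_inv, det_fin_one, Matrix.mul_assoc,
    ← replicateCol_mulVec, replicateRow_mul_replicateCol]
  rfl

theorem sumElim_dotProduct_inv_fromBlocks_mulVec (A : Matrix ι ι 𝕜) (hA : IsUnit A.det)
    (v r : ι → 𝕜) (c : 𝕜) (hd : c - r ⬝ᵥ A⁻¹ *ᵥ v ≠ 0) (u w : ι → 𝕜) (a b : 𝕜) :
    Sum.elim u (fun _ : Fin 1 => a) ⬝ᵥ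
        (fromBlocks A (replicateCol (Fin 1) v) (replicateRow (Fin 1) r) (of fun _ _ => c))⁻¹ *ᵥ
          Sum.elim w (fun _ => b) =
      u ⬝ᵥ A⁻¹ *ᵥ w +
        (a - u ⬝ᵥ A⁻¹ *ᵥ v) * (b - r ⬝ᵥ A⁻¹ *ᵥ w) / (c - r ⬝ᵥ A⁻¹ *ᵥ v) := by
  set β := (b - r ⬝ᵥ A⁻¹ *ᵥ w) / (c - r ⬝ᵥ A⁻¹ *ᵥ v)
  have hM : IsUnit (fromBlocks A (replicateCol (Fin 1) v) (replicateRow (Fin 1) r)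
      (of fun _ _ => c)).det := by
    rw [det_fromBlocks_replicateCol_replicateRow A hA]
    exact hA.mul hd.isUnit
  let := invertibleOfIsUnitDet _ hM
  -- the solution of the bordered system, by elimination of the last unknown
  rw [inv_mulVec_eq_vec (v := Sum.elim (A⁻¹ *ᵥ w - β • A⁻¹ *ᵥ v) fun _ => β)]
  · have hcorner : (fun _ : Fin 1 => a) ⬝ᵥ (fun _ => β) = a * β := by simp [dotProduct]
    rw [sumElim_dotProduct_sumElim, dotProduct_sub, dotProduct_smul, smul_eq_mul, hcorner]
    ring
  · rw [fromBlocks_mulVec, Sum.elim_comp_inl, Sum.elim_comp_inr, mulVec_sub, mulVec_smul,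
      mulVec_mulVec, mulVec_mulVec, mul_nonsing_inv _ hA, one_mulVec, one_mulVec]
    congr 1
    · have hcol : replicateCol (Fin 1) v *ᵥ (fun _ => β) = β • v := by
        ext k
        simp [mulVec, dotProduct, mul_comm]
      rw [hcol, sub_add_cancel]
    · ext k
      have hcorner : ((of fun _ _ => c) *ᵥ fun _ : Fin 1 => β) k = c * β := by
        simp [mulVec, dotProduct]
      simp only [Pi.add_apply, hcorner, replicateRow_mulVec_eq_const, Function.const_apply,
        dotProduct_sub, dotProduct_smul, smul_eq_mul, β]
      field_simp
      ring

end Bordered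

section Correlation

variable {n : ℕ} {R : Matrix (Fin n) (Fin n) ℝ}

/-- `ρ_{m+1}^{*j} R_m⁻¹ (ρ_{m+1}^{*j'})ᵀ`: the covariance of the projections of the `j`-th
and `j'`-th variables onto the span of the first `m`. -/
noncomputable def leadForm (R : Matrix (Fin n) (Fin n) ℝ) (m : ℕ) (h : m ≤ n) (j j' : Fin n) :
    ℝ :=
  colv R m h j ⬝ᵥ (lead R m h)⁻¹ *ᵥ colv R m h j'

theorem isSymm_of_posDef (hR : R.PosDef) : R.IsSymm :=
  isHermitian_iff_isSymm.1 hR.isHermitian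

theorem lead_posDef (hR : R.PosDef) (m : ℕ) (h : m ≤ n) : (lead R m h).PosDef :=
  hR.submatrix (Fin.castLE_injective h)

theorem isUnit_det_lead (hR : R.PosDef) (m : ℕ) (h : m ≤ n) : IsUnit (lead R m h).det :=
  (lead_posDef hR m h).det_pos.ne'.isUnit

theorem leadForm_comm (hR : R.IsSymm) (m : ℕ) (h : m ≤ n) (j j' : Fin n) :
    leadForm R m h j j' = leadForm R m h j' j := by
  have hinv : (lead R m h)⁻¹ᵀ = (lead R m h)⁻¹ := (hR.submatrix (Fin.castLE h)).inv
  rw [leadForm, ← hinv, dotProduct_transpose_mulVec, leadForm]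

theorem leadForm_eq_of_lt (hR : R.PosDef) {m : ℕ} (h : m ≤ n) (j : Fin n) {j' : Fin n}
    (hj' : (j' : ℕ) < m) : leadForm R m h j j' = R j' j := by
  have hcol : colv R m h j' = lead R m h *ᵥ Pi.single ⟨j', hj'⟩ 1 := by
    ext k
    simp [mulVec_single, colv, lead]
  rw [leadForm, hcol, mulVec_mulVec, nonsing_inv_mul _ (isUnit_det_lead hR m h), one_mulVec,
    dotProduct_single, mul_one]
  rfl

theorem brd_eq_submatrix_fromBlocks (m : ℕ) (h : m ≤ n) (j : Fin n) :
    brd R m h j = (fromBlocks (lead R m h) (replicateCol (Fin 1) (colv R m h j))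
      (replicateRow (Fin 1) (colv R m h j)) (of fun _ _ => 1)).submatrix
        finSumFinEquiv.symm finSumFinEquiv.symm := by
  ext k l
  induction k using Fin.lastCases <;> induction l using Fin.lastCases <;>
    simp [brd, lead, colv, Fin.castLE]

theorem det_brd (hR : R.PosDef) (m : ℕ) (h : m ≤ n) (j : Fin n) :
    (brd R m h j).det = (lead R m h).det * (1 - leadForm R m h j j) := by
  rw [brd_eq_submatrix_fromBlocks, det_submatrix_equiv_self,
    det_fromBlocks_replicateCol_replicateRow _ (isUnit_det_lead hR m h), leadForm]

theorem lead_succ_eq_brd (hR : R.IsSymm) (hdiag : ∀ k, R k k = 1) (m : ℕ) (hm : m < n) :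
    lead R (m + 1) hm = brd R m hm.le ⟨m, hm⟩ := by
  ext k l
  induction k using Fin.lastCases <;> induction l using Fin.lastCases <;>
    simp only [lead, brd, submatrix_apply, of_apply, Fin.castLE, Fin.val_last, Fin.val_castSucc,
      Fin.is_lt, lt_self_iff_false, dite_true, dite_false, hdiag]
  exact hR.apply _ _

theorem det_lead_succ (hR : R.PosDef) (hdiag : ∀ k, R k k = 1) (m : ℕ) (hm : m < n) :
    (lead R (m + 1) hm).det =
      (lead R m hm.le).det * (1 - leadForm R m hm.le ⟨m, hm⟩ ⟨m, hm⟩) := by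
  rw [lead_succ_eq_brd (isSymm_of_posDef hR) hdiag, det_brd hR]

theorem one_sub_leadForm_self_pos (hR : R.PosDef) (hdiag : ∀ k, R k k = 1) (m : ℕ)
    (hm : m < n) :
    0 < 1 - leadForm R m hm.le ⟨m, hm⟩ ⟨m, hm⟩ := by
  have hpos := (lead_posDef hR (m + 1) hm).det_pos
  rw [det_lead_succ hR hdiag] at hpos
  exact pos_of_mul_pos_right hpos (lead_posDef hR m hm.le).det_pos.le

theorem colv_succ_comp_finSumFinEquiv (m : ℕ) (hm : m < n) (j : Fin n) :
    colv R (m + 1) hm j ∘ finSumFinEquiv =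
      Sum.elim (colv R m hm.le j) fun _ => R ⟨m, hm⟩ j := by
  ext (k | k)
  · rfl
  · simp [colv, Fin.castLE, Fin.eq_zero k]

theorem leadForm_succ (hR : R.PosDef) (hdiag : ∀ k, R k k = 1) (m : ℕ) (hm : m < n)
    (j j' : Fin n) :
    leadForm R (m + 1) hm j j' = leadForm R m hm.le j j' +
      (R ⟨m, hm⟩ j - leadForm R m hm.le j ⟨m, hm⟩) *
        (R ⟨m, hm⟩ j' - leadForm R m hm.le ⟨m, hm⟩ j') /
          (1 - leadForm R m hm.le ⟨m, hm⟩ ⟨m, hm⟩) := by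
  rw [leadForm, lead_succ_eq_brd (isSymm_of_posDef hR) hdiag, brd_eq_submatrix_fromBlocks,
    inv_submatrix_equiv, submatrix_mulVec_equiv, Equiv.symm_symm,
    dotProduct_comp_equiv_symm, colv_succ_comp_finSumFinEquiv, colv_succ_comp_finSumFinEquiv,
    sumElim_dotProduct_inv_fromBlocks_mulVec _ (isUnit_det_lead hR m hm.le) _ _ _
      (one_sub_leadForm_self_pos hR hdiag m hm).ne']
  rfl

theorem spc_eq_div (k : ℕ) (hk : k < n) (j : Fin n) :
    spc R k hk j = (R ⟨k, hk⟩ j - leadForm R k hk.le j ⟨k, hk⟩) /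
      √(1 - leadForm R k hk.le ⟨k, hk⟩ ⟨k, hk⟩) :=
  rfl

theorem spc_eq_zero_of_lt (hR : R.PosDef) (k : ℕ) (hk : k < n) {j : Fin n} (hj : (j : ℕ) < k) :
    spc R k hk j = 0 := by
  rw [spc_eq_div, leadForm_comm (isSymm_of_posDef hR), leadForm_eq_of_lt hR _ _ hj,
    (isSymm_of_posDef hR).apply j ⟨k, hk⟩, sub_self, zero_div]

theorem spc_self (hR : R.PosDef) (hdiag : ∀ k, R k k = 1) (k : ℕ) (hk : k < n) :
    spc R k hk ⟨k, hk⟩ = √((lead R (k + 1) hk).det / (lead R k hk.le).det) := by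
  rw [spc_eq_div, hdiag, det_lead_succ hR hdiag,
    mul_div_cancel_left₀ _ (lead_posDef hR k hk.le).det_pos.ne', Real.div_sqrt]

theorem det_brd_div_sub_det_brd_div (hR : R.PosDef) (hdiag : ∀ k, R k k = 1) (k : ℕ)
    (hk : k < n) (j : Fin n) :
    (brd R k hk.le j).det / (lead R k hk.le).det -
        (brd R (k + 1) hk j).det / (lead R (k + 1) hk).det = spc R k hk j ^ 2 := by
  rw [det_brd hR, det_brd hR, mul_div_cancel_left₀ _ (lead_posDef hR k hk.le).det_pos.ne',
    mul_div_cancel_left₀ _ (lead_posDef hR (k + 1) hk).det_pos.ne', leadForm_succ hR hdiag,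
    spc_eq_div, div_pow, Real.sq_sqrt (one_sub_leadForm_self_pos hR hdiag k hk).le,
    leadForm_comm (isSymm_of_posDef hR) _ _ ⟨k, hk⟩ j]
  ring

noncomputable def spcMatrix (R : Matrix (Fin n) (Fin n) ℝ) : Matrix (Fin n) (Fin n) ℝ :=
  of fun i j => spc R i i.isLt j

theorem sum_spcMatrix_mul_spcMatrix (hR : R.PosDef) (hdiag : ∀ k, R k k = 1) (m : ℕ)
    (h : m ≤ n) (j j' : Fin n) :
    ∑ k : Fin m, spcMatrix R (Fin.castLE h k) j * spcMatrix R (Fin.castLE h k) j' =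
      leadForm R m h j j' := by
  induction m with
  | zero => simp [leadForm]
  | succ m ih =>
    rw [Fin.sum_univ_castSucc, leadForm_succ hR hdiag m h, ← ih (Nat.le_of_succ_le h)]
    congr 1
    change spc R m h j * spc R m h j' = _
    rw [spc_eq_div, spc_eq_div, div_mul_div_comm,
      Real.mul_self_sqrt (one_sub_leadForm_self_pos hR hdiag m h).le,
      leadForm_comm (isSymm_of_posDef hR) _ _ j']

theorem transpose_spcMatrix_mul_spcMatrix (hR : R.PosDef) (hdiag : ∀ k, R k k = 1) :
    (spcMatrix R)ᵀ * spcMatrix R = R := by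
  ext j j'
  calc ((spcMatrix R)ᵀ * spcMatrix R) j j' = leadForm R n le_rfl j j' := by
        simpa [mul_apply] using sum_spcMatrix_mul_spcMatrix hR hdiag n le_rfl j j'
    _ = R j' j := leadForm_eq_of_lt hR le_rfl j j'.isLt
    _ = R j j' := (isSymm_of_posDef hR).apply j j'

end Correlation

/-- Second parametrization of the Cholesky factor: with `s i j ∈ {−1, +1}` the
sign of the semi-partial correlation `ρ_{ij(1,…,i−1)}`, the lower-triangular
matrix with `L_{jj} = √(det R_j/det R_{j−1})` and, for `i < j`,
`L_{ji} = s_{ij} √(det(R_i^{*j})/det(R_{i−1}) − det(R_{i+1}^{*j})/det(R_i))`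
satisfies `L Lᵀ = R`. -/
theorem stmt8 {n : ℕ} (R : Matrix (Fin n) (Fin n) ℝ) (hR : R.PosDef)
    (hdiag : ∀ k, R k k = 1) (s : Fin n → Fin n → ℝ)
    (hs1 : ∀ i j : Fin n, s i j = 1 ∨ s i j = -1)
    (hs2 : ∀ i j : Fin n, (i : ℕ) < (j : ℕ) → 0 ≤ s i j * spc R i i.isLt j)
    (L : Matrix (Fin n) (Fin n) ℝ)
    (hL : ∀ j i : Fin n,
      L j i =
        if (j : ℕ) = (i : ℕ) then
          Real.sqrt ((lead R ((j : ℕ) + 1) j.isLt).det / (lead R (j : ℕ) j.isLt.le).det)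
        else if (i : ℕ) < (j : ℕ) then
          s i j *
            Real.sqrt
              ((brd R (i : ℕ) i.isLt.le j).det / (lead R (i : ℕ) i.isLt.le).det -
                (brd R ((i : ℕ) + 1) i.isLt j).det / (lead R ((i : ℕ) + 1) i.isLt).det)
        else 0) :
    L * Lᵀ = R := by
  have hLS : L = (spcMatrix R)ᵀ := by
    ext j i
    rw [hL, transpose_apply]
    split_ifs with hji hij
    · obtain rfl := Fin.ext hji
      exact (spc_self hR hdiag j j.isLt).symm
    · rw [det_brd_div_sub_det_brd_div hR hdiag, Real.sqrt_sq_eq_abs,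
        sign_mul_abs_eq (hs1 i j) (hs2 i j hij)]
      rfl
    · exact (spc_eq_zero_of_lt hR i i.isLt (by omega)).symm
  rw [hLS, transpose_transpose, transpose_spcMatrix_mul_spcMatrix hR hdiag]
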